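/- arXiv:2304.13217 — 2 statements merged into one kernel-verified Lean document; each statement's English description precedes it below -/
import Mathlib

section
/- In the setup of a shortest dicycle $1,2,\dots,q$ (with $q \ge 2$) in the auxiliary digraph $H$ for $S, T \in \mathcal{F}_{k,r}$, with $Y = X_2 \cup \dots \cup X_q$: the arc $f_1$ has its tail in $X_1 \setminus Y$ and its head in $X_1 \cap Y$. -/
open Finset

variable {V A : Type*}

/-- Number of arcs of `F` entering the vertex set `X`. -/
def inDeg [DecidableEq V] (hd tl : A → V) (F : Finset A) (X : Finset V) : ℕ :=
  (F.filter (fun a => hd a ∈ X ∧ tl a ∉ X)).card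

/-- Number of arcs of `F` with head `v`. -/
def vDeg [DecidableEq V] (hd : A → V) (F : Finset A) (v : V) : ℕ :=
  (F.filter (fun a => hd a = v)).card

/-- The vertex set `X` contains the arc `a` (both endpoints in `X`). -/
def ArcIn (hd tl : A → V) (X : Finset V) (a : A) : Prop :=
  hd a ∈ X ∧ tl a ∈ X

/-- `F` contains a directed cycle. -/
def HasDicycle (hd tl : A → V) (F : Finset A) : Prop :=
  ∃ n : ℕ, 0 < n ∧ ∃ (v : Fin (n + 1) → V) (e : Fin n → A),
    (∀ i : Fin n, e i ∈ F ∧ tl (e i) = v i.castSucc ∧ hd (e i) = v i.succ) ∧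
    v 0 = v (Fin.last n)

/-- `F` is an `r`-arborescence: acyclic, every non-root vertex has exactly one
incoming arc, and `r` has none. -/
def IsArb [DecidableEq V] (hd tl : A → V) (r : V) (F : Finset A) : Prop :=
  ¬ HasDicycle hd tl F ∧ (∀ v : V, v ≠ r → inDeg hd tl F {v} = 1) ∧
    inDeg hd tl F {r} = 0

/-- `F` can be partitioned into `k` arc-disjoint `r`-arborescences. -/
def Feasible [DecidableEq V] [DecidableEq A] (hd tl : A → V) (k : ℕ) (r : V)
    (F : Finset A) : Prop :=
  ∃ P : Fin k → Finset A, (∀ i j : Fin k, i ≠ j → Disjoint (P i) (P j)) ∧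
    Finset.univ.biUnion P = F ∧ ∀ i : Fin k, IsArb hd tl r (P i)

/-- `F` can be partitioned into `k` arc-disjoint arborescences with arbitrary roots. -/
def FeasibleAny [DecidableEq V] [DecidableEq A] (hd tl : A → V) (k : ℕ)
    (F : Finset A) : Prop :=
  ∃ P : Fin k → Finset A, (∀ i j : Fin k, i ≠ j → Disjoint (P i) (P j)) ∧
    Finset.univ.biUnion P = F ∧ ∀ i : Fin k, ∃ r : V, IsArb hd tl r (P i)

/-- `X` is a tight set with respect to `S`: it avoids the root and exactly `k`
arcs of `S` enter it. -/
def Tight [DecidableEq V] (hd tl : A → V) (S : Finset A) (k : ℕ) (r : V)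
    (X : Finset V) : Prop :=
  r ∉ X ∧ inDeg hd tl S X = k

/-- `X` is the inclusionwise minimal tight set with respect to `S` containing the
arc `f`, or `X = V` if no tight set contains `f`. -/
def MinTightFor [Fintype V] [DecidableEq V] (hd tl : A → V) (S : Finset A)
    (k : ℕ) (r : V) (f : A) (X : Finset V) : Prop :=
  (Tight hd tl S k r X ∧ ArcIn hd tl X f ∧
    ∀ Y : Finset V, Tight hd tl S k r Y → ArcIn hd tl Y f → X ⊆ Y) ∨
  ((¬ ∃ Y : Finset V, Tight hd tl S k r Y ∧ ArcIn hd tl Y f) ∧ X = Finset.univ)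

/-- A directed cycle of length `m` in the auxiliary digraph `H` on `[p]`, whose
arcs are the pairs `(i, j)` such that `X i` contains `e j`. -/
def AuxCycle {p : ℕ} (hd tl : A → V) (X : Fin p → Finset V) (e : Fin p → A)
    (m : ℕ) : Prop :=
  ∃ c : Fin m → Fin p, Function.Injective c ∧
    ∀ i : Fin m, ArcIn hd tl (X (c i)) (e (c ⟨(i.val + 1) % m, Nat.mod_lt _ i.pos⟩))

/-- `seq` is a reconfiguration sequence of length `ℓ` from `S` to `T` within the
family described by `Feas`. -/
def IsReconfig [DecidableEq A] (Feas : Finset A → Prop) (S T : Finset A) (ℓ : ℕ)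
    (seq : Fin (ℓ + 1) → Finset A) : Prop :=
  seq 0 = S ∧ seq (Fin.last ℓ) = T ∧ (∀ i, Feas (seq i)) ∧
    ∀ i : Fin ℓ, (seq i.castSucc \ seq i.succ).card = 1 ∧
      (seq i.succ \ seq i.castSucc).card = 1

lemma inDeg_eq_sum [DecidableEq V] (hd tl : A → V) (F : Finset A) (X : Finset V) :
    inDeg hd tl F X = ∑ a ∈ F, (if hd a ∈ X ∧ tl a ∉ X then 1 else 0) := by
  unfold inDeg
  exact Finset.card_filter _ _

lemma arb_inDeg_pos [DecidableEq V] (hd tl : A → V) (r : V) (F : Finset A)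
    (hF : IsArb hd tl r F) (X : Finset V) (hne : X.Nonempty) (hr : r ∉ X) :
    1 ≤ inDeg hd tl F X := by
  classical
  by_contra hcon
  push_neg at hcon
  obtain ⟨hnc, hdeg, -⟩ := hF
  have h0 : ∀ a ∈ F, hd a ∈ X → tl a ∈ X := by
    intro a ha hha
    by_contra htl
    have h1 : (F.filter (fun a => hd a ∈ X ∧ tl a ∉ X)).Nonempty :=
      ⟨a, Finset.mem_filter.2 ⟨ha, hha, htl⟩⟩
    have h2 := Finset.card_pos.2 h1
    unfold inDeg at hcon
    omega
  have hstep : ∀ v : {x // x ∈ X}, ∃ a, a ∈ F ∧ hd a = v.1 ∧ tl a ∈ X := by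
    rintro ⟨v, hv⟩
    have hv1 := hdeg v (by rintro rfl; exact hr hv)
    have h3 : (F.filter (fun a => hd a ∈ ({v} : Finset V) ∧ tl a ∉ ({v} : Finset V))).Nonempty := by
      apply Finset.card_pos.1
      unfold inDeg at hv1
      omega
    obtain ⟨a, ha⟩ := h3
    rw [Finset.mem_filter] at ha
    obtain ⟨haF, hha, -⟩ := ha
    simp only [Finset.mem_singleton] at hha
    exact ⟨a, haF, hha, h0 a haF (hha ▸ hv)⟩
  choose arc harcF harchd harctl using hstep
  obtain ⟨v0, hv0⟩ := hne
  set x0 : {x // x ∈ X} := ⟨v0, hv0⟩ with hx0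
  set g : {x // x ∈ X} → {x // x ∈ X} := fun v => ⟨tl (arc v), harctl v⟩ with hg
  have main : ∀ i j : ℕ, i < j → g^[i] x0 = g^[j] x0 → False := by
    intro i j hij heq
    set w : ℕ → V := fun m => (g^[m] x0).1 with hw
    have harc_hd : ∀ m : ℕ, hd (arc (g^[m] x0)) = w m := fun m => harchd _
    have harc_tl : ∀ m : ℕ, tl (arc (g^[m] x0)) = w (m + 1) := by
      intro m
      rw [hw]
      simp only [Function.iterate_succ_apply']
      rfl
    apply hnc
    refine ⟨j - i, by omega, fun t => w (i + ((j - i) - t.1)),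
      fun t => arc (g^[i + ((j - i) - t.1 - 1)] x0), fun t => ⟨harcF _, ?_, ?_⟩, ?_⟩
    · rw [harc_tl]
      show w _ = w (i + ((j - i) - (t.castSucc).1))
      rw [Fin.coe_castSucc]
      exact congrArg w (by have := t.2; omega)
    · rw [harc_hd]
      show w _ = w (i + ((j - i) - (t.succ).1))
      rw [Fin.val_succ]
      exact congrArg w (by have := t.2; omega)
    · show w (i + ((j - i) - ((0 : Fin (j - i + 1))).1)) =
        w (i + ((j - i) - (Fin.last (j - i)).1))
      rw [Fin.val_zero, Fin.val_last]
      rw [show i + ((j - i) - 0) = j by omega, show i + ((j - i) - (j - i)) = i by omega]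
      exact (congrArg Subtype.val heq).symm
  have hninj : ¬ Function.Injective (fun m : Fin (X.card + 1) => g^[m.1] x0) := by
    intro hinj
    have hle := Fintype.card_le_of_injective _ hinj
    simp [Fintype.card_coe] at hle
  rw [Function.not_injective_iff] at hninj
  obtain ⟨a, b, hab, hne'⟩ := hninj
  rcases Ne.lt_or_gt (show (a : ℕ) ≠ (b : ℕ) from fun h => hne' (Fin.ext h)) with h | h
  · exact main a b h hab
  · exact main b a h hab.symm

lemma feasible_inDeg_ge [DecidableEq V] [DecidableEq A] (hd tl : A → V) (k : ℕ) (r : V)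
    (S : Finset A) (hS : Feasible hd tl k r S) (X : Finset V) (hne : X.Nonempty)
    (hr : r ∉ X) : k ≤ inDeg hd tl S X := by
  classical
  obtain ⟨P, hdisj, hun, harb⟩ := hS
  have hsplit : inDeg hd tl S X = ∑ i, inDeg hd tl (P i) X := by
    unfold inDeg
    rw [← hun, Finset.filter_biUnion, Finset.card_biUnion]
    intro i _ j _ hij
    exact Finset.disjoint_filter_filter (hdisj i j hij)
  rw [hsplit]
  calc k = ∑ _i : Fin k, 1 := by simp
  _ ≤ _ := Finset.sum_le_sum fun i _ => arb_inDeg_pos hd tl r (P i) (harb i) X hne hr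

lemma inDeg_submod [DecidableEq V] (hd tl : A → V) (F : Finset A) (A' B : Finset V) :
    inDeg hd tl F (A' ∪ B) + inDeg hd tl F (A' ∩ B) ≤
      inDeg hd tl F A' + inDeg hd tl F B := by
  simp only [inDeg_eq_sum, ← Finset.sum_add_distrib]
  refine Finset.sum_le_sum fun a _ => ?_
  by_cases h1 : hd a ∈ A' <;> by_cases h2 : hd a ∈ B <;>
    by_cases h3 : tl a ∈ A' <;> by_cases h4 : tl a ∈ B <;>
    simp [Finset.mem_union, Finset.mem_inter, h1, h2, h3, h4]

lemma tight_union_inter [DecidableEq V] [DecidableEq A] (hd tl : A → V) (k : ℕ) (r : V)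
    (S : Finset A) (hS : Feasible hd tl k r S) (A' B : Finset V)
    (hA : Tight hd tl S k r A') (hB : Tight hd tl S k r B) (hne : (A' ∩ B).Nonempty) :
    Tight hd tl S k r (A' ∪ B) ∧ Tight hd tl S k r (A' ∩ B) := by
  obtain ⟨hrA, hdA⟩ := hA
  obtain ⟨hrB, hdB⟩ := hB
  have hrU : r ∉ A' ∪ B := by simp [hrA, hrB]
  have hrI : r ∉ A' ∩ B := by simp [hrA]
  have hneU : (A' ∪ B).Nonempty := hne.mono (Finset.inter_subset_left.trans Finset.subset_union_left)
  have hU := feasible_inDeg_ge hd tl k r S hS _ hneU hrU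
  have hI := feasible_inDeg_ge hd tl k r S hS _ hne hrI
  have hsub := inDeg_submod hd tl S A' B
  rw [hdA, hdB] at hsub
  exact ⟨⟨hrU, by omega⟩, ⟨hrI, by omega⟩⟩

lemma tight_cross [DecidableEq V] [DecidableEq A] (hd tl : A → V) (k : ℕ) (r : V)
    (S : Finset A) (hS : Feasible hd tl k r S) (A' B : Finset V)
    (hA : Tight hd tl S k r A') (hB : Tight hd tl S k r B) (hne : (A' ∩ B).Nonempty)
    (a : A) (ha : a ∈ S) (h1 : hd a ∈ A') (h2 : hd a ∉ B) (h3 : tl a ∉ A')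
    (h4 : tl a ∈ B) : False := by
  obtain ⟨hU, hI⟩ := tight_union_inter hd tl k r S hS A' B hA hB hne
  have hle : ∀ x ∈ S,
      ((if hd x ∈ A' ∪ B ∧ tl x ∉ A' ∪ B then 1 else 0) +
        (if hd x ∈ A' ∩ B ∧ tl x ∉ A' ∩ B then 1 else 0)) ≤
      ((if hd x ∈ A' ∧ tl x ∉ A' then 1 else 0) + (if hd x ∈ B ∧ tl x ∉ B then 1 else 0)) := by
    intro x _
    by_cases g1 : hd x ∈ A' <;> by_cases g2 : hd x ∈ B <;>
      by_cases g3 : tl x ∈ A' <;> by_cases g4 : tl x ∈ B <;>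
      simp [Finset.mem_union, Finset.mem_inter, g1, g2, g3, g4]
  have hsum : ∑ x ∈ S, ((if hd x ∈ A' ∪ B ∧ tl x ∉ A' ∪ B then 1 else 0) +
      (if hd x ∈ A' ∩ B ∧ tl x ∉ A' ∩ B then 1 else 0)) =
      ∑ x ∈ S, ((if hd x ∈ A' ∧ tl x ∉ A' then 1 else 0) +
      (if hd x ∈ B ∧ tl x ∉ B then 1 else 0)) := by
    rw [Finset.sum_add_distrib, Finset.sum_add_distrib, ← inDeg_eq_sum, ← inDeg_eq_sum,
      ← inDeg_eq_sum, ← inDeg_eq_sum, hU.2, hI.2, hA.2, hB.2]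
  have hpt := (Finset.sum_eq_sum_iff_of_le hle).1 hsum a ha
  simp [Finset.mem_union, Finset.mem_inter, h1, h2, h3, h4] at hpt
theorem stmt_7 [Fintype V] [DecidableEq V] [DecidableEq A] (hd tl : A → V)
    (k p : ℕ) (r : V)
    (S T : Finset A) (hS : Feasible hd tl k r S) (hT : Feasible hd tl k r T)
    (e f : Fin p → A)
    (he_inj : Function.Injective e) (hf_inj : Function.Injective f)
    (he_range : S \ T = Finset.image e Finset.univ)
    (hf_range : T \ S = Finset.image f Finset.univ)
    (h_heads : ∀ i : Fin p, hd (e i) = hd (f i))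
    (X : Fin p → Finset V) (hX : ∀ i : Fin p, MinTightFor hd tl S k r (f i) (X i))
    (q : ℕ) (hq2 : 2 ≤ q) (hqp : q ≤ p)
    (hcyc : ∀ i : Fin q, ArcIn hd tl (X (Fin.castLE hqp i))
      (e (Fin.castLE hqp ⟨(i.val + 1) % q, Nat.mod_lt _ i.pos⟩)))
    (hshort : ∀ m : ℕ, 0 < m → m < q → ¬ AuxCycle hd tl X e m)
    :
    tl (f (Fin.castLE hqp ⟨0, by omega⟩)) ∈
        X (Fin.castLE hqp ⟨0, by omega⟩) \
          ((Finset.univ.filter (fun i : Fin q => i ≠ ⟨0, by omega⟩)).biUnion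
            (fun i => X (Fin.castLE hqp i))) ∧
      hd (f (Fin.castLE hqp ⟨0, by omega⟩)) ∈
        X (Fin.castLE hqp ⟨0, by omega⟩) ∩
          ((Finset.univ.filter (fun i : Fin q => i ≠ ⟨0, by omega⟩)).biUnion
            (fun i => X (Fin.castLE hqp i))) := by
  classical
  have hq0 : (0 : ℕ) < q := by omega
  have h1q : (1 : ℕ) < q := by omega
  have hq1 : q - 1 < q := by omega
  have h11 : 1 ≤ q - 1 := by omega
  -- every e i belongs to S
  have heS : ∀ i : Fin p, e i ∈ S := by
    intro i
    have h := Finset.mem_image_of_mem e (Finset.mem_univ i)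
    rw [← he_range] at h
    exact (Finset.mem_sdiff.1 h).1
  -- each X i is tight, contains f i, and is minimal such
  have hXt : ∀ i : Fin p, Tight hd tl S k r (X i) ∧ ArcIn hd tl (X i) (f i) ∧
      (∀ W, Tight hd tl S k r W → ArcIn hd tl W (f i) → X i ⊆ W) := by
    intro i
    rcases hX i with h | ⟨-, h2⟩
    · exact h
    · exfalso
      refine hshort 1 one_pos (by omega)
        ⟨fun _ => i, fun a b _ => Subsingleton.elim a b, ?_⟩
      intro t
      rw [h2]
      exact ⟨Finset.mem_univ _, Finset.mem_univ _⟩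
  -- reformulated cycle condition
  have harc : ∀ a b : Fin q, (a.1 + 1) % q = b.1 →
      ArcIn hd tl (X (Fin.castLE hqp a)) (e (Fin.castLE hqp b)) := by
    intro a b hab
    have h := hcyc a
    have heq : (⟨(a.1 + 1) % q, Nat.mod_lt _ a.pos⟩ : Fin q) = b := Fin.ext hab
    rw [← heq]
    exact h
  have harc' : ∀ (a b : ℕ) (ha : a < q) (hb : b < q), (a + 1) % q = b →
      ArcIn hd tl (X (Fin.castLE hqp ⟨a, ha⟩)) (e (Fin.castLE hqp ⟨b, hb⟩)) :=
    fun a b ha hb h => harc ⟨a, ha⟩ ⟨b, hb⟩ h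
  -- index congruence helpers
  have hecongr : ∀ (a a' : ℕ) (ha : a < q) (ha' : a' < q), a = a' →
      e (Fin.castLE hqp ⟨a, ha⟩) = e (Fin.castLE hqp ⟨a', ha'⟩) := by
    rintro a a' ha ha' rfl; rfl
  have hXcongr : ∀ (a a' : ℕ) (ha : a < q) (ha' : a' < q), a = a' →
      X (Fin.castLE hqp ⟨a, ha⟩) = X (Fin.castLE hqp ⟨a', ha'⟩) := by
    rintro a a' ha ha' rfl; rfl
  -- the partial unions
  set U : ℕ → Finset V := fun j =>
    (Finset.univ.filter (fun i : Fin q => 1 ≤ i.val ∧ i.val ≤ j)).biUnion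
      (fun i => X (Fin.castLE hqp i)) with hUdef
  have hUmem : ∀ (j : ℕ) (v : V), v ∈ U j ↔
      ∃ i : Fin q, (1 ≤ i.val ∧ i.val ≤ j) ∧ v ∈ X (Fin.castLE hqp i) := by
    intro j v
    simp [hUdef]
  have hZU : ∀ (j t : ℕ) (ht : t < q), 1 ≤ t → t ≤ j →
      ∀ v, v ∈ X (Fin.castLE hqp ⟨t, ht⟩) → v ∈ U j := by
    intro j t ht h1 h2 v hv
    exact (hUmem j v).2 ⟨⟨t, ht⟩, ⟨h1, h2⟩, hv⟩
  -- connecting vertices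
  have hconn : ∀ (t : ℕ) (ht : t + 1 < q),
      hd (e (Fin.castLE hqp ⟨t + 1, ht⟩)) ∈
        X (Fin.castLE hqp ⟨t, Nat.lt_of_succ_lt ht⟩) ∩ X (Fin.castLE hqp ⟨t + 1, ht⟩) := by
    intro t ht
    have h1 := (harc' t (t + 1) (Nat.lt_of_succ_lt ht) ht (Nat.mod_eq_of_lt ht)).1
    have h2 : hd (e (Fin.castLE hqp ⟨t + 1, ht⟩)) ∈ X (Fin.castLE hqp ⟨t + 1, ht⟩) := by
      rw [h_heads]
      exact (hXt _).2.1.1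
    exact Finset.mem_inter.2 ⟨h1, h2⟩
  -- the partial unions are tight
  have hTU : ∀ j, 1 ≤ j → j < q → Tight hd tl S k r (U j) := by
    intro j
    induction j with
    | zero => intro h; exact absurd h (by omega)
    | succ n ih =>
      intro _ hlt
      by_cases hn : n = 0
      · subst hn
        have hU1 : U 1 = X (Fin.castLE hqp ⟨0 + 1, hlt⟩) := by
          ext v
          rw [hUmem]
          constructor
          · rintro ⟨i, ⟨ha, hb⟩, hv⟩
            have hieq : i = ⟨0 + 1, hlt⟩ := Fin.ext (show i.1 = 0 + 1 by omega)
            rwa [← hieq]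
          · intro hv
            exact ⟨⟨0 + 1, hlt⟩, ⟨le_refl 1, le_refl 1⟩, hv⟩
        rw [hU1]
        exact (hXt _).1
      · have h1n : 1 ≤ n := by omega
        have hnq : n < q := by omega
        have ihn := ih h1n hnq
        have hsplit : U (n + 1) = U n ∪ X (Fin.castLE hqp ⟨n + 1, hlt⟩) := by
          ext v
          rw [Finset.mem_union, hUmem, hUmem]
          constructor
          · rintro ⟨i, ⟨ha, hb⟩, hv⟩
            by_cases hc : i.val ≤ n
            · exact Or.inl ⟨i, ⟨ha, hc⟩, hv⟩
            · have hieq : i = ⟨n + 1, hlt⟩ := Fin.ext (show i.1 = n + 1 by omega)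
              right; rwa [← hieq]
          · rintro (⟨i, ⟨ha, hb⟩, hv⟩ | hv)
            · exact ⟨i, ⟨ha, by omega⟩, hv⟩
            · exact ⟨⟨n + 1, hlt⟩, ⟨show 1 ≤ n + 1 by omega, le_refl _⟩, hv⟩
        rw [hsplit]
        have hne : (U n ∩ X (Fin.castLE hqp ⟨n + 1, hlt⟩)).Nonempty := by
          obtain ⟨h1, h2⟩ := Finset.mem_inter.1 (hconn n hlt)
          exact ⟨_, Finset.mem_inter.2 ⟨hZU n n hnq h1n (le_refl n) _ h1, h2⟩⟩
        exact (tight_union_inter hd tl k r S hS _ _ ihn ((hXt _).1) hne).1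
  -- head of e_1
  have hdE1 : hd (e (Fin.castLE hqp ⟨1, h1q⟩)) ∈ X (Fin.castLE hqp ⟨1, h1q⟩) := by
    rw [h_heads]
    exact (hXt _).2.1.1
  -- shortcut cycles
  have hshortcut : ∀ (m : ℕ), 1 ≤ m → ∀ (hmq : m < q),
      ArcIn hd tl (X (Fin.castLE hqp ⟨m, hmq⟩)) (e (Fin.castLE hqp ⟨1, h1q⟩)) → False := by
    intro m hm1 hmq harcm
    refine hshort m (by omega) hmq
      ⟨fun t => Fin.castLE hqp ⟨t.1 + 1, by have := t.2; omega⟩, ?_, ?_⟩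
    · intro a b hab
      have h := congrArg Fin.val hab
      simp only [Fin.coe_castLE] at h
      exact Fin.ext (by omega)
    · intro t
      have ht2 := t.2
      show ArcIn hd tl (X (Fin.castLE hqp ⟨t.1 + 1, by omega⟩))
        (e (Fin.castLE hqp ⟨(t.1 + 1) % m + 1, by have := Nat.mod_lt (t.1 + 1) (show 0 < m by omega); omega⟩))
      by_cases hend : t.1 + 1 = m
      · rw [hecongr ((t.1 + 1) % m + 1) 1 _ _ (by rw [hend, Nat.mod_self]),
          hXcongr (t.1 + 1) m _ _ hend]
        exact harcm
      · rw [hecongr ((t.1 + 1) % m + 1) (t.1 + 2) _ _ (by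
          have := Nat.mod_eq_of_lt (show t.1 + 1 < m by omega); omega)]
        exact harc' (t.1 + 1) (t.1 + 2) (by omega) (by omega)
          (Nat.mod_eq_of_lt (by omega))
  -- tail of e_1 is not in any partial union
  have hnoTl : ∀ j, 1 ≤ j → j < q → tl (e (Fin.castLE hqp ⟨1, h1q⟩)) ∉ U j := by
    intro j
    induction j with
    | zero => intro h; exact absurd h (by omega)
    | succ n ih =>
      intro _ hlt hmem
      rw [hUmem] at hmem
      obtain ⟨i, ⟨hi1, hi2⟩, hv⟩ := hmem
      by_cases hc : i.val ≤ n
      · exact ih (by omega) (by omega) ((hUmem n _).2 ⟨i, ⟨hi1, hc⟩, hv⟩)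
      · have hieq : i = ⟨n + 1, hlt⟩ := Fin.ext (show i.1 = n + 1 by omega)
        rw [hieq] at hv
        by_cases hhd : hd (e (Fin.castLE hqp ⟨1, h1q⟩)) ∈ X (Fin.castLE hqp ⟨n + 1, hlt⟩)
        · exact hshortcut (n + 1) (by omega) hlt ⟨hhd, hv⟩
        · by_cases hn : n = 0
          · subst hn
            exact hhd hdE1
          · have h1n : 1 ≤ n := by omega
            refine tight_cross hd tl k r S hS (U n) (X (Fin.castLE hqp ⟨n + 1, hlt⟩))
              (hTU n h1n (by omega)) ((hXt _).1) ?_ (e (Fin.castLE hqp ⟨1, h1q⟩))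
              (heS _) ?_ hhd ?_ hv
            · obtain ⟨h1, h2⟩ := Finset.mem_inter.1 (hconn n hlt)
              exact ⟨_, Finset.mem_inter.2 ⟨hZU n n (by omega) h1n (le_refl n) _ h1, h2⟩⟩
            · exact hZU n 1 h1q (le_refl 1) h1n _ hdE1
            · exact ih h1n (by omega)
  -- identify Y with U (q-1)
  have hYeq : ((Finset.univ.filter (fun i : Fin q => i ≠ ⟨0, by omega⟩)).biUnion
      (fun i => X (Fin.castLE hqp i))) = U (q - 1) := by
    ext v
    rw [hUmem]
    simp only [Finset.mem_biUnion, Finset.mem_filter, Finset.mem_univ, true_and]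
    constructor
    · rintro ⟨i, hi, hv⟩
      have hne0 : i.1 ≠ 0 := fun h => hi (Fin.ext h)
      have := i.2
      exact ⟨i, ⟨by omega, by omega⟩, hv⟩
    · rintro ⟨i, ⟨hi, -⟩, hv⟩
      have hne0 : i.1 = 0 → False := by omega
      exact ⟨i, fun h => hne0 (congrArg Fin.val h), hv⟩
  have hYt := hTU (q - 1) h11 hq1
  have harc0 : ArcIn hd tl (X (Fin.castLE hqp ⟨0, hq0⟩)) (f (Fin.castLE hqp ⟨0, hq0⟩)) :=
    (hXt _).2.1
  have hhdY : hd (f (Fin.castLE hqp ⟨0, hq0⟩)) ∈ U (q - 1) := by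
    have h := (harc' (q - 1) 0 hq1 hq0 (by rw [Nat.sub_add_cancel (by omega : 1 ≤ q), Nat.mod_self])).1
    rw [h_heads] at h
    exact hZU (q - 1) (q - 1) hq1 h11 (le_refl _) _ h
  have htlY : tl (f (Fin.castLE hqp ⟨0, hq0⟩)) ∉ U (q - 1) := by
    intro hmem
    have hint : (X (Fin.castLE hqp ⟨0, hq0⟩) ∩ U (q - 1)).Nonempty :=
      ⟨_, Finset.mem_inter.2 ⟨harc0.1, hhdY⟩⟩
    have htight := (tight_union_inter hd tl k r S hS _ _ (hXt _).1 hYt hint).2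
    have hsub := (hXt (Fin.castLE hqp ⟨0, hq0⟩)).2.2 _ htight
      ⟨Finset.mem_inter.2 ⟨harc0.1, hhdY⟩, Finset.mem_inter.2 ⟨harc0.2, hmem⟩⟩
    have htl1 : tl (e (Fin.castLE hqp ⟨1, h1q⟩)) ∈ X (Fin.castLE hqp ⟨0, hq0⟩) :=
      (harc' 0 1 hq0 h1q (Nat.mod_eq_of_lt h1q)).2
    exact hnoTl (q - 1) h11 hq1 (Finset.mem_inter.1 (hsub htl1)).2
  rw [hYeq]
  exact ⟨Finset.mem_sdiff.2 ⟨harc0.2, htlY⟩, Finset.mem_inter.2 ⟨harc0.1, hhdY⟩⟩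
end

section
/- Let $S, T \in \mathcal{F}_{k,r}$ with matched symmetric differences $e_i, f_i$ and minimal tight sets $X_i$ as above, and suppose the auxiliary digraph $H$ has a shortest dicycle of length $q \ge 2$. Then $q \le k$. -/
open Finset

variable {V A : Type*}

/-- Submodularity of the in-degree function, keeping one of the two crossing
terms. -/
lemma inDeg_submod_s11 [DecidableEq V] (hd tl : A → V) (S : Finset A) (U W : Finset V) :
    inDeg hd tl S (U ∪ W) + inDeg hd tl S (U ∩ W)
      + (S.filter (fun a => (hd a ∈ U ∧ hd a ∉ W) ∧ (tl a ∈ W ∧ tl a ∉ U))).card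
    ≤ inDeg hd tl S U + inDeg hd tl S W := by
  classical
  simp only [inDeg, Finset.card_filter]
  rw [← Finset.sum_add_distrib, ← Finset.sum_add_distrib, ← Finset.sum_add_distrib]
  apply Finset.sum_le_sum
  intro a _
  by_cases h1 : hd a ∈ U <;> by_cases h2 : hd a ∈ W <;>
    by_cases h3 : tl a ∈ U <;> by_cases h4 : tl a ∈ W <;>
    simp [Finset.mem_union, Finset.mem_inter, h1, h2, h3, h4]

/-- An arborescence has at least one arc entering any nonempty vertex set
avoiding the root. -/
lemma arb_enters [Fintype V] [DecidableEq V] (hd tl : A → V) (r : V) (F : Finset A)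
    (hF : IsArb hd tl r F) (Y : Finset V) (hY : Y.Nonempty) (hr : r ∉ Y) :
    1 ≤ inDeg hd tl F Y := by
  classical
  by_contra hcon
  have h0 : inDeg hd tl F Y = 0 := by omega
  have hno : ∀ a ∈ F, hd a ∈ Y → tl a ∈ Y := by
    intro a ha hha
    by_contra htl
    have hmem : a ∈ F.filter (fun a => hd a ∈ Y ∧ tl a ∉ Y) := by
      simp [ha, hha, htl]
    have := Finset.card_pos.mpr ⟨a, hmem⟩
    simp only [inDeg] at h0; omega
  have hstep : ∀ v : {x // x ∈ Y}, ∃ a : A, a ∈ F ∧ hd a = v.1 ∧ tl a ∈ Y := by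
    rintro ⟨v, hv⟩
    have hvr : v ≠ r := fun h => hr (h ▸ hv)
    have h1 : inDeg hd tl F {v} = 1 := hF.2.1 v hvr
    have hne : (F.filter (fun a => hd a ∈ ({v} : Finset V) ∧ tl a ∉ ({v} : Finset V))).Nonempty := by
      rw [← Finset.card_pos]; simp only [inDeg] at h1; omega
    obtain ⟨a, ha⟩ := hne
    simp only [Finset.mem_filter, Finset.mem_singleton] at ha
    exact ⟨a, ha.1, ha.2.1, hno a ha.1 (by rw [ha.2.1]; exact hv)⟩
  choose arc harcF harchd harctl using hstep
  obtain ⟨y0, hy0⟩ := hY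
  set nxt : {x // x ∈ Y} → {x // x ∈ Y} := fun v => ⟨tl (arc v), harctl v⟩ with hnxt
  set sq : ℕ → {x // x ∈ Y} := fun n => nxt^[n] ⟨y0, hy0⟩ with hsq
  obtain ⟨n0, m0, hnm, heq⟩ := Finite.exists_ne_map_eq_of_infinite sq
  wlog hlt : n0 < m0 generalizing n0 m0
  · exact this m0 n0 hnm.symm heq.symm (by omega)
  apply hF.1
  refine ⟨m0 - n0, by omega, fun j => (sq (m0 - j.val)).1,
    fun j => arc (sq (m0 - j.val - 1)), ?_, ?_⟩
  · intro j
    have hj : j.val < m0 - n0 := j.isLt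
    have hsucc : sq (m0 - j.val - 1 + 1) = nxt (sq (m0 - j.val - 1)) := by
      rw [hsq]; exact Function.iterate_succ_apply' _ _ _
    have harith : m0 - j.val - 1 + 1 = m0 - j.val := by omega
    refine ⟨harcF _, ?_, ?_⟩
    · show tl (arc (sq (m0 - j.val - 1))) = (sq (m0 - j.castSucc.val)).1
      have hh : (nxt (sq (m0 - j.val - 1))).1 = tl (arc (sq (m0 - j.val - 1))) := rfl
      rw [← hh, ← hsucc, harith]
      rfl
    · show hd (arc (sq (m0 - j.val - 1))) = (sq (m0 - j.succ.val)).1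
      rw [harchd]
      have hh : m0 - j.succ.val = m0 - j.val - 1 := by
        simp only [Fin.val_succ]; omega
      rw [hh]
  · show (sq (m0 - 0)).1 = (sq (m0 - (Fin.last (m0 - n0)).val)).1
    have h1 : m0 - 0 = m0 := by omega
    have h2 : m0 - (Fin.last (m0 - n0)).val = n0 := by
      simp only [Fin.val_last]; omega
    rw [h1, h2, ← heq]

/-- A feasible arc set has at least `k` arcs entering any nonempty vertex set
avoiding the root. -/
lemma feasible_lb [Fintype V] [DecidableEq V] [DecidableEq A] (hd tl : A → V)
    (k : ℕ) (r : V) (S : Finset A) (hS : Feasible hd tl k r S)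
    (Y : Finset V) (hY : Y.Nonempty) (hr : r ∉ Y) :
    k ≤ inDeg hd tl S Y := by
  classical
  obtain ⟨P, hdisj, hunion, harb⟩ := hS
  have hsum : inDeg hd tl S Y = ∑ i : Fin k, inDeg hd tl (P i) Y := by
    simp only [inDeg, ← hunion, Finset.filter_biUnion]
    rw [Finset.card_biUnion]
    intro i _ j _ hij
    exact Finset.disjoint_filter_filter (hdisj i j hij)
  rw [hsum]
  calc k = ∑ _i : Fin k, 1 := by simp
  _ ≤ _ := Finset.sum_le_sum fun i _ => arb_enters hd tl r (P i) (harb i) Y hY hr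

/-- Uncrossing two intersecting tight sets: union and intersection are tight,
and there is no crossing arc. -/
lemma tight_uncross [Fintype V] [DecidableEq V] [DecidableEq A] (hd tl : A → V)
    (k : ℕ) (r : V) (S : Finset A) (hS : Feasible hd tl k r S)
    (U W : Finset V) (hU : Tight hd tl S k r U) (hW : Tight hd tl S k r W)
    (hI : (U ∩ W).Nonempty) :
    Tight hd tl S k r (U ∪ W) ∧ Tight hd tl S k r (U ∩ W) ∧
      (S.filter (fun a => (hd a ∈ U ∧ hd a ∉ W) ∧ (tl a ∈ W ∧ tl a ∉ U))) = ∅ := by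
  classical
  have hrU : r ∉ U ∪ W := by
    simp only [Finset.mem_union]; rintro (h | h); exacts [hU.1 h, hW.1 h]
  have hrI : r ∉ U ∩ W := fun h => hU.1 (Finset.mem_inter.mp h).1
  have hUn : (U ∪ W).Nonempty := hI.mono Finset.inter_subset_union
  have h1 := feasible_lb hd tl k r S hS (U ∪ W) hUn hrU
  have h2 := feasible_lb hd tl k r S hS (U ∩ W) hI hrI
  have h3 := inDeg_submod_s11 hd tl S U W
  rw [hU.2, hW.2] at h3
  refine ⟨⟨hrU, by omega⟩, ⟨hrI, by omega⟩, ?_⟩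
  rw [← Finset.card_eq_zero]; omega

theorem stmt_11 [Fintype V] [DecidableEq V] [DecidableEq A] (hd tl : A → V)
    (k p : ℕ) (r : V)
    (S T : Finset A) (hS : Feasible hd tl k r S) (hT : Feasible hd tl k r T)
    (e f : Fin p → A)
    (he_inj : Function.Injective e) (hf_inj : Function.Injective f)
    (he_range : S \ T = Finset.image e Finset.univ)
    (hf_range : T \ S = Finset.image f Finset.univ)
    (h_heads : ∀ i : Fin p, hd (e i) = hd (f i))
    (X : Fin p → Finset V) (hX : ∀ i : Fin p, MinTightFor hd tl S k r (f i) (X i))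
    (q : ℕ) (hq2 : 2 ≤ q) (hcyc : AuxCycle hd tl X e q)
    (hshort : ∀ m : ℕ, 0 < m → m < q → ¬ AuxCycle hd tl X e m) :
    q ≤ k := by
  classical
  haveI : NeZero q := ⟨by omega⟩
  haveI : Fact (1 < q) := ⟨by omega⟩
  obtain ⟨c, hcinj, hc⟩ := hcyc
  set c' : ZMod q → Fin p := fun z => c ⟨z.val, ZMod.val_lt z⟩ with hc'def
  have hc'inj : Function.Injective c' := by
    intro a b hab
    have h1 : (⟨a.val, ZMod.val_lt a⟩ : Fin q) = ⟨b.val, ZMod.val_lt b⟩ := hcinj hab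
    have h2 : a.val = b.val := congrArg Fin.val h1
    rw [← ZMod.natCast_zmod_val a, ← ZMod.natCast_zmod_val b, h2]
  have hcyc' : ∀ z : ZMod q, ArcIn hd tl (X (c' z)) (e (c' (z + 1))) := by
    intro z
    have h := hc ⟨z.val, ZMod.val_lt z⟩
    have hidx : c' (z + 1)
        = c ⟨((⟨z.val, ZMod.val_lt z⟩ : Fin q).val + 1) % q,
            Nat.mod_lt _ (⟨z.val, ZMod.val_lt z⟩ : Fin q).pos⟩ := by
      rw [hc'def]
      ext
      simp only [ZMod.val_add, ZMod.val_one]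
    rw [hidx]
    exact h
  have hq1 : ((q - 1 : ℕ) : ZMod q) = -1 := by
    have h : ((q - 1 : ℕ) : ZMod q) + 1 = ((q : ℕ) : ZMod q) := by
      rw [← Nat.cast_one (R := ZMod q), ← Nat.cast_add]
      congr 1
      omega
    rw [ZMod.natCast_self] at h
    linear_combination h
  -- no chords in the cycle
  have hF2 : ∀ z w : ZMod q, ArcIn hd tl (X (c' z)) (e (c' w)) → w = z + 1 := by
    intro z w hzw
    by_contra hne
    have hdlt : (z - w).val < q := ZMod.val_lt _
    have hdne : (z - w).val ≠ q - 1 := by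
      intro h
      apply hne
      have h1 : (((z - w).val : ℕ) : ZMod q) = z - w := ZMod.natCast_zmod_val _
      rw [h, hq1] at h1
      linear_combination h1
    set d := (z - w).val with hdd
    apply hshort (d + 1) (by omega) (by omega)
    refine ⟨fun t => c' (w + ((t.val : ℕ) : ZMod q)), ?_, ?_⟩
    · intro a b hab
      have h1 : w + ((a.val : ℕ) : ZMod q) = w + ((b.val : ℕ) : ZMod q) := hc'inj hab
      have h2 : ((a.val : ℕ) : ZMod q) = ((b.val : ℕ) : ZMod q) := add_left_cancel h1
      have h3 : a.val = b.val := by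
        have h4 := congrArg ZMod.val h2
        rwa [ZMod.val_cast_of_lt (by omega : a.val < q),
          ZMod.val_cast_of_lt (by omega : b.val < q)] at h4
      exact Fin.ext h3
    · intro t
      show ArcIn hd tl (X (c' (w + ((t.val : ℕ) : ZMod q))))
        (e (c' (w + ((((t.val + 1) % (d + 1) : ℕ)) : ZMod q))))
      by_cases ht : t.val = d
      · have hmod : (t.val + 1) % (d + 1) = 0 := by rw [ht]; simp
        rw [hmod, ht]
        have hz : w + ((d : ℕ) : ZMod q) = z := by
          rw [hdd, ZMod.natCast_zmod_val]; ring
        rw [hz]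
        simpa using hzw
      · have htlt : t.val < d := by have := t.isLt; omega
        have hmod : (t.val + 1) % (d + 1) = t.val + 1 := Nat.mod_eq_of_lt (by omega)
        rw [hmod]
        have hcast : w + (((t.val + 1 : ℕ)) : ZMod q) = (w + ((t.val : ℕ) : ZMod q)) + 1 := by
          push_cast; ring
        rw [hcast]
        exact hcyc' _
  have hone : (1 : ZMod q) ≠ 0 := by
    intro h
    have h2 := congrArg ZMod.val h
    rw [ZMod.val_one, ZMod.val_zero] at h2
    omega
  -- each cycle set is tight and contains its f-arc
  have hTight : ∀ z : ZMod q,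
      Tight hd tl S k r (X (c' z)) ∧ ArcIn hd tl (X (c' z)) (f (c' z)) := by
    intro z
    rcases hX (c' z) with ⟨ht, ha, _⟩ | ⟨_, huniv⟩
    · exact ⟨ht, ha⟩
    · exfalso
      have harc : ArcIn hd tl (X (c' z)) (e (c' z)) := by
        rw [huniv]; exact ⟨Finset.mem_univ _, Finset.mem_univ _⟩
      have h1 := hF2 z z harc
      exact hone (by linear_combination -h1)
  -- consecutive overlap
  have hov : ∀ z : ZMod q,
      hd (e (c' (z + 1))) ∈ X (c' z) ∧ hd (e (c' (z + 1))) ∈ X (c' (z + 1)) := by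
    intro z
    refine ⟨(hcyc' z).1, ?_⟩
    rw [h_heads (c' (z + 1))]
    exact (hTight (z + 1)).2.1
  -- unions of consecutive runs
  set Uf : ZMod q → ℕ → Finset V :=
    fun z t => (Finset.range (t + 1)).biUnion (fun s => X (c' (z + (s : ZMod q)))) with hUfdef
  have hUzero : ∀ z, Uf z 0 = X (c' z) := by
    intro z
    rw [hUfdef]
    simp
  have hUsucc : ∀ z t, Uf z (t + 1) = Uf z t ∪ X (c' (z + ((t + 1 : ℕ) : ZMod q))) := by
    intro z t
    rw [hUfdef]
    simp only [Finset.range_add_one, Finset.biUnion_insert]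
    exact Finset.union_comm _ _
  have hUsub : ∀ (z : ZMod q) (t s : ℕ), s ≤ t → X (c' (z + (s : ZMod q))) ⊆ Uf z t := by
    intro z t s hs
    rw [hUfdef]
    exact Finset.subset_biUnion_of_mem (fun s : ℕ => X (c' (z + (s : ZMod q))))
      (Finset.mem_range.mpr (by omega))
  have hUtight : ∀ z t, Tight hd tl S k r (Uf z t) := by
    intro z t
    induction t with
    | zero => rw [hUzero]; exact (hTight z).1
    | succ t ih =>
      rw [hUsucc]
      have hcast : z + ((t + 1 : ℕ) : ZMod q) = (z + (t : ZMod q)) + 1 := by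
        push_cast; ring
      have hI : (Uf z t ∩ X (c' (z + ((t + 1 : ℕ) : ZMod q)))).Nonempty := by
        refine ⟨hd (e (c' ((z + (t : ZMod q)) + 1))), Finset.mem_inter.mpr ⟨?_, ?_⟩⟩
        · exact hUsub z t t le_rfl (hov (z + (t : ZMod q))).1
        · rw [hcast]; exact (hov (z + (t : ZMod q))).2
      exact (tight_uncross hd tl k r S hS _ _ ih
        ((hTight _).1) hI).1
  -- every other cycle set is inside the complementary run
  have hYsubW : ∀ z w : ZMod q, w ≠ z → X (c' w) ⊆ Uf (z + 1) (q - 2) := by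
    intro z w hwz
    have hslt : (w - (z + 1)).val < q := ZMod.val_lt _
    have hsne : (w - (z + 1)).val ≠ q - 1 := by
      intro h
      apply hwz
      have h1 : (((w - (z + 1)).val : ℕ) : ZMod q) = w - (z + 1) := ZMod.natCast_zmod_val _
      rw [h, hq1] at h1
      linear_combination -h1
    have hcast : (z + 1) + (((w - (z + 1)).val : ℕ) : ZMod q) = w := by
      rw [ZMod.natCast_zmod_val]; ring
    have hsub := hUsub (z + 1) (q - 2) (w - (z + 1)).val (by omega)
    rwa [hcast] at hsub
  -- the union of all cycle sets
  set Z : Finset V := Finset.univ.biUnion (fun z : ZMod q => X (c' z)) with hZdef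
  have hXsubZ : ∀ z : ZMod q, X (c' z) ⊆ Z := by
    intro z
    rw [hZdef]
    exact Finset.subset_biUnion_of_mem (fun w => X (c' w)) (Finset.mem_univ z)
  have hWsubZ : ∀ z : ZMod q, Uf (z + 1) (q - 2) ⊆ Z := by
    intro z x hx
    rw [hUfdef] at hx
    simp only [Finset.mem_biUnion] at hx
    obtain ⟨s, _, hs⟩ := hx
    exact hXsubZ _ hs
  have hZeq : ∀ z : ZMod q, Z = X (c' z) ∪ Uf (z + 1) (q - 2) := by
    intro z
    apply Finset.Subset.antisymm
    · intro x hx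
      rw [hZdef] at hx
      simp only [Finset.mem_biUnion] at hx
      obtain ⟨w, _, hw⟩ := hx
      by_cases hwz : w = z
      · exact Finset.mem_union_left _ (hwz ▸ hw)
      · exact Finset.mem_union_right _ (hYsubW z w hwz hw)
    · exact Finset.union_subset (hXsubZ z) (hWsubZ z)
  have hZtight : Tight hd tl S k r Z := by
    rw [hZeq 0]
    have hI : (X (c' 0) ∩ Uf (0 + 1) (q - 2)).Nonempty := by
      refine ⟨hd (e (c' (0 + 1))), Finset.mem_inter.mpr ⟨(hov 0).1, ?_⟩⟩
      have hsub := hUsub (0 + 1) (q - 2) 0 (by omega)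
      rw [Nat.cast_zero, add_zero] at hsub
      exact hsub (hov 0).2
    exact (tight_uncross hd tl k r S hS _ _ (hTight 0).1 (hUtight (0 + 1) (q - 2)) hI).1
  -- the key claim: a private entering arc for each cycle index
  have hkey : ∀ z : ZMod q, ∃ a, a ∈ S ∧ (hd a ∈ Z ∧ tl a ∉ Z) ∧
      hd a ∉ Uf (z + 1) (q - 2) := by
    intro z
    set W : Finset V := Uf (z + 1) (q - 2) with hWdef
    have hWtight : Tight hd tl S k r W := hUtight (z + 1) (q - 2)
    have hWZ : W ⊆ Z := hWsubZ z
    set EZ := S.filter (fun a => hd a ∈ Z ∧ tl a ∉ Z) with hEZdef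
    set EW := S.filter (fun a => hd a ∈ W ∧ tl a ∉ W) with hEWdef
    have hEZcard : EZ.card = k := hZtight.2
    have hEWcard : EW.card = k := hWtight.2
    have hsplitZ : (EZ.filter (fun a => hd a ∈ W)).card
        + (EZ.filter (fun a => ¬ hd a ∈ W)).card = k := by
      rw [Finset.card_filter_add_card_filter_not]; exact hEZcard
    have hsplitW : (EW.filter (fun a => tl a ∉ Z)).card
        + (EW.filter (fun a => ¬ tl a ∉ Z)).card = k := by
      rw [Finset.card_filter_add_card_filter_not]; exact hEWcard
    have hP1eq : EZ.filter (fun a => hd a ∈ W) = EW.filter (fun a => tl a ∉ Z) := by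
      ext a
      simp only [hEZdef, hEWdef, Finset.mem_filter]
      constructor
      · rintro ⟨⟨haS, hhZ, htZ⟩, hhW⟩
        exact ⟨⟨haS, hhW, fun h => htZ (hWZ h)⟩, htZ⟩
      · rintro ⟨⟨haS, hhW, _⟩, htZ⟩
        exact ⟨⟨haS, hWZ hhW, htZ⟩, hhW⟩
    have hQeq : (EZ.filter (fun a => ¬ hd a ∈ W)).card
        = (EW.filter (fun a => ¬ tl a ∉ Z)).card := by
      rw [hP1eq] at hsplitZ; omega
    have hP2ne : (EZ.filter (fun a => ¬ hd a ∈ W)).Nonempty := by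
      rw [← Finset.card_pos]
      by_contra hcon
      have hQ0 : (EW.filter (fun a => ¬ tl a ∉ Z)) = ∅ := by
        rw [← Finset.card_eq_zero]; omega
      -- consider the arc e_{z+1}
      set a := e (c' (z + 1)) with hadef
      have haS : a ∈ S := by
        have hmem : a ∈ S \ T := by
          rw [he_range]
          exact Finset.mem_image_of_mem e (Finset.mem_univ _)
        exact (Finset.mem_sdiff.mp hmem).1
      have hz1ne : (z + 1 : ZMod q) ≠ z := by
        intro h
        exact hone (by linear_combination h)
      have hhdX : hd a ∈ X (c' (z + 1)) := by
        rw [hadef, h_heads (c' (z + 1))]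
        exact (hTight (z + 1)).2.1
      have hhdW : hd a ∈ W := hYsubW z (z + 1) hz1ne hhdX
      have htlZ : tl a ∈ Z := hXsubZ z (hcyc' z).2
      have htlW : tl a ∈ W := by
        by_contra hcontl
        have : a ∈ EW.filter (fun a => ¬ tl a ∉ Z) := by
          simp only [hEWdef, Finset.mem_filter]
          exact ⟨⟨haS, hhdW, hcontl⟩, by simp [htlZ]⟩
        rw [hQ0] at this
        simp at this
      -- minimal prefix of the run containing tl a
      have hex : ∃ t, tl a ∈ Uf (z + 1) t := ⟨q - 2, htlW⟩
      set t0 := Nat.find hex with ht0def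
      have ht0 : tl a ∈ Uf (z + 1) t0 := Nat.find_spec hex
      have ht0le : t0 ≤ q - 2 := Nat.find_le htlW
      rcases Nat.eq_zero_or_eq_succ_pred t0 with h00 | h00
      · rw [h00, hUzero] at ht0
        have harc : ArcIn hd tl (X (c' (z + 1))) (e (c' (z + 1))) := ⟨hhdX, ht0⟩
        have h1 := hF2 (z + 1) (z + 1) harc
        exact hone (by linear_combination -h1)
      · set t' := t0 - 1 with ht'def
        have ht0eq : t0 = t' + 1 := h00
        have hnotprev : tl a ∉ Uf (z + 1) t' := Nat.find_min hex (by omega)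
        have htlY : tl a ∈ X (c' ((z + 1) + ((t' + 1 : ℕ) : ZMod q))) := by
          rw [ht0eq, hUsucc] at ht0
          rcases Finset.mem_union.mp ht0 with h | h
          · exact absurd h hnotprev
          · exact h
        by_cases hhdY : hd a ∈ X (c' ((z + 1) + ((t' + 1 : ℕ) : ZMod q)))
        · have h1 := hF2 _ (z + 1) ⟨hhdY, htlY⟩
          have h2 : ((t' + 2 : ℕ) : ZMod q) = 0 := by
            push_cast at h1 ⊢
            linear_combination -h1
          rw [ZMod.natCast_eq_zero_iff] at h2
          have := Nat.le_of_dvd (by omega) h2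
          omega
        · -- crossing arc contradiction
          have hcast : (z + 1) + ((t' + 1 : ℕ) : ZMod q)
              = ((z + 1) + ((t' : ℕ) : ZMod q)) + 1 := by
            push_cast; ring
          have hI : (Uf (z + 1) t' ∩ X (c' ((z + 1) + ((t' + 1 : ℕ) : ZMod q)))).Nonempty := by
            refine ⟨hd (e (c' (((z + 1) + ((t' : ℕ) : ZMod q)) + 1))),
              Finset.mem_inter.mpr ⟨?_, ?_⟩⟩
            · exact hUsub (z + 1) t' t' le_rfl (hov ((z + 1) + ((t' : ℕ) : ZMod q))).1
            · rw [hcast]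
              exact (hov ((z + 1) + ((t' : ℕ) : ZMod q))).2
          have hcross := (tight_uncross hd tl k r S hS _ _
            (hUtight (z + 1) t') ((hTight _).1) hI).2.2
          have hhdU : hd a ∈ Uf (z + 1) t' := by
            have hsub := hUsub (z + 1) t' 0 (by omega)
            rw [Nat.cast_zero, add_zero] at hsub
            exact hsub hhdX
          have hmem : a ∈ S.filter (fun b =>
              (hd b ∈ Uf (z + 1) t' ∧ hd b ∉ X (c' ((z + 1) + ((t' + 1 : ℕ) : ZMod q)))) ∧
              (tl b ∈ X (c' ((z + 1) + ((t' + 1 : ℕ) : ZMod q))) ∧ tl b ∉ Uf (z + 1) t')) := by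
            simp only [Finset.mem_filter]
            exact ⟨haS, ⟨hhdU, hhdY⟩, ⟨htlY, hnotprev⟩⟩
          rw [hcross] at hmem
          simp at hmem
    obtain ⟨a, ha⟩ := hP2ne
    simp only [hEZdef, Finset.mem_filter] at ha
    exact ⟨a, ha.1.1, ha.1.2, ha.2⟩
  -- conclude by injectivity
  choose g hgS hgZ hgW using hkey
  have hginj : Set.InjOn g (Finset.univ : Finset (ZMod q)) := by
    intro z1 _ z2 _ hgz
    by_contra hne
    have h1 : hd (g z1) ∈ X (c' z1) := by
      have := hgZ z1
      rcases Finset.mem_union.mp ((hZeq z1) ▸ this.1) with h | h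
      · exact h
      · exact absurd h (hgW z1)
    have h2 : hd (g z1) ∈ Uf (z2 + 1) (q - 2) := hYsubW z2 z1 hne h1
    rw [hgz] at h2
    exact (hgW z2) h2
  have hmaps : ∀ z ∈ (Finset.univ : Finset (ZMod q)),
      g z ∈ S.filter (fun a => hd a ∈ Z ∧ tl a ∉ Z) := by
    intro z _
    simp only [Finset.mem_filter]
    exact ⟨hgS z, hgZ z⟩
  have hcard := Finset.card_le_card_of_injOn g hmaps hginj
  rw [Finset.card_univ, ZMod.card] at hcard
  have hk : (S.filter (fun a => hd a ∈ Z ∧ tl a ∉ Z)).card = k := hZtight.2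
  omega
end
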